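/- arXiv:2109.02487 — 3 statements merged into one kernel-verified Lean document; each statement's English description precedes it below -/
import Mathlib

section
/- Let $v \in \{-1,1\}^n$ with $v_t = -1$ for $t \le k$ and $v_t = 1$ for $t > k$, where $1 \le k < n$. Then $\max_{1\le s \le e \le n} \left|(e-s+1)^{-1/2}\sum_{t=s}^{e} v_t\right| = \max(\sqrt{k}, \sqrt{n-k})$, and the maximum is attained at the interval $[1,k]$ or $[k+1,n]$. -/
/-- Scaled partial sum statistic `U_{s,e}(x)`. -/
noncomputable def U (x : ℕ → ℝ) (s e : ℕ) : ℝ :=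
  (∑ t ∈ Finset.Icc s e, x t) / Real.sqrt ((e : ℝ) - s + 1)

/-- for the step sign vector (-1 up to k, +1 after), the maximum
absolute scaled partial sum over all subintervals of [1,n] equals
`max(√k, √(n-k))`, attained at `[1,k]` and `[k+1,n]`. -/
theorem stmt12 (n k : ℕ) (hk : 1 ≤ k) (hkn : k < n) (v : ℕ → ℝ)
    (hv1 : ∀ t, 1 ≤ t → t ≤ k → v t = -1)
    (hv2 : ∀ t, k < t → t ≤ n → v t = 1) :
    (∀ s e, 1 ≤ s → s ≤ e → e ≤ n →
      |U v s e| ≤ max (Real.sqrt k) (Real.sqrt ((n : ℝ) - k))) ∧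
    |U v 1 k| = Real.sqrt k ∧ |U v (k + 1) n| = Real.sqrt ((n : ℝ) - k) := by
  have hknR : (k : ℝ) ≤ n := by exact_mod_cast hkn.le
  refine ⟨?_, ?_, ?_⟩
  · intro s e hs hse hen
    set A := (Finset.Icc s e).filter (fun t => t ≤ k) with hA
    set B := (Finset.Icc s e).filter (fun t => ¬ t ≤ k) with hB
    set a := A.card with ha
    set b := B.card with hb
    have hsum : ∑ t ∈ Finset.Icc s e, v t = (b : ℝ) - a := by
      rw [← Finset.sum_filter_add_sum_filter_not (Finset.Icc s e) (fun t => t ≤ k)]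
      have h1 : ∑ t ∈ A, v t = -(a : ℝ) := by
        have : ∀ t ∈ A, v t = -1 := by
          intro t ht
          rw [hA, Finset.mem_filter, Finset.mem_Icc] at ht
          exact hv1 t (hs.trans ht.1.1) ht.2
        rw [Finset.sum_congr rfl this]
        simp [ha]
      have h2 : ∑ t ∈ B, v t = (b : ℝ) := by
        have : ∀ t ∈ B, v t = 1 := by
          intro t ht
          rw [hB, Finset.mem_filter, Finset.mem_Icc] at ht
          exact hv2 t (Nat.lt_of_not_le ht.2) (ht.1.2.trans hen)
        rw [Finset.sum_congr rfl this]
        simp [hb]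
      rw [h1, h2]; ring
    have hab : a + b = e + 1 - s := by
      rw [ha, hb, hA, hB, Finset.card_filter_add_card_filter_not,
        Nat.card_Icc]
    have habR : ((e : ℝ) - s + 1) = ((a : ℝ) + b) := by
      have h1 : ((a + b : ℕ) : ℝ) = ((e + 1 - s : ℕ) : ℝ) := by rw [hab]
      have hs' : s ≤ e + 1 := hse.trans (Nat.le_succ e)
      push_cast [hs'] at h1
      linarith
    have hak : a ≤ k := by
      have : A ⊆ Finset.Icc 1 k := by
        intro t ht
        rw [hA, Finset.mem_filter, Finset.mem_Icc] at ht
        exact Finset.mem_Icc.mpr ⟨hs.trans ht.1.1, ht.2⟩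
      calc a ≤ (Finset.Icc 1 k).card := Finset.card_le_card this
        _ = k := by rw [Nat.card_Icc]; omega
    have hbnk : b ≤ n - k := by
      have : B ⊆ Finset.Icc (k + 1) n := by
        intro t ht
        rw [hB, Finset.mem_filter, Finset.mem_Icc] at ht
        exact Finset.mem_Icc.mpr ⟨Nat.lt_of_not_le ht.2, ht.1.2.trans hen⟩
      calc b ≤ (Finset.Icc (k + 1) n).card := Finset.card_le_card this
        _ = n - k := by rw [Nat.card_Icc]; omega
    have hbnkR : (b : ℝ) ≤ (n : ℝ) - k := by
      have : ((b : ℕ) : ℝ) ≤ ((n - k : ℕ) : ℝ) := by exact_mod_cast hbnk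
      rwa [Nat.cast_sub hkn.le] at this
    have hakR : (a : ℝ) ≤ k := by exact_mod_cast hak
    have hNpos : (0 : ℝ) < (e : ℝ) - s + 1 := by
      have : (s : ℝ) ≤ e := by exact_mod_cast hse
      linarith
    set M : ℝ := max ((k : ℝ)) ((n : ℝ) - k) with hM
    have hM0 : 0 ≤ M := le_trans (by positivity) (le_max_left _ _)
    have key : ((b : ℝ) - a) ^ 2 ≤ M * ((e : ℝ) - s + 1) := by
      have hmax : |(b : ℝ) - a| ≤ max (a : ℝ) b := by
        rw [abs_le]
        constructor
        · have : (b : ℝ) ≥ 0 := by positivity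
          have := le_max_left (a : ℝ) (b : ℝ)
          nlinarith
        · have : (a : ℝ) ≥ 0 := by positivity
          have := le_max_right (a : ℝ) (b : ℝ)
          nlinarith
      have h1 : ((b : ℝ) - a) ^ 2 ≤ (max (a : ℝ) b) ^ 2 := by
        rw [← sq_abs]
        exact pow_le_pow_left₀ (abs_nonneg _) hmax 2
      have h2 : max (a : ℝ) b ≤ M :=
        max_le (hakR.trans (le_max_left _ _)) (hbnkR.trans (le_max_right _ _))
      have h3 : max (a : ℝ) b ≤ (e : ℝ) - s + 1 := by
        rw [habR]
        exact max_le (le_add_of_nonneg_right (Nat.cast_nonneg b))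
          (le_add_of_nonneg_left (Nat.cast_nonneg a))
      have h4 : 0 ≤ max (a : ℝ) b := le_trans (by positivity) (le_max_left _ _)
      nlinarith
    have habs : |U v s e| ≤ Real.sqrt M := by
      rw [← Real.sqrt_sq_eq_abs]
      apply Real.sqrt_le_sqrt
      rw [U, hsum, div_pow, Real.sq_sqrt hNpos.le]
      rw [div_le_iff₀ hNpos]
      exact key
    refine habs.trans ?_
    rcases le_total ((k : ℝ)) ((n : ℝ) - k) with h | h
    · rw [hM, max_eq_right h]; exact le_max_right _ _
    · rw [hM, max_eq_left h]; exact le_max_left _ _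
  · have hsum : ∑ t ∈ Finset.Icc 1 k, v t = -(k : ℝ) := by
      have : ∀ t ∈ Finset.Icc 1 k, v t = -1 := by
        intro t ht
        rw [Finset.mem_Icc] at ht
        exact hv1 t ht.1 ht.2
      rw [Finset.sum_congr rfl this]
      simp [Nat.card_Icc]
    rw [U, hsum]
    have h1 : (k : ℝ) - ((1:ℕ):ℝ) + 1 = (k : ℝ) := by push_cast; ring
    rw [h1, abs_div, abs_neg, abs_of_nonneg (by positivity : (0:ℝ) ≤ (k:ℝ)),
      abs_of_nonneg (Real.sqrt_nonneg _), Real.div_sqrt]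
  · have hsum : ∑ t ∈ Finset.Icc (k + 1) n, v t = (n : ℝ) - k := by
      have : ∀ t ∈ Finset.Icc (k + 1) n, v t = 1 := by
        intro t ht
        rw [Finset.mem_Icc] at ht
        exact hv2 t ht.1 ht.2
      rw [Finset.sum_congr rfl this]
      rw [Finset.sum_const, Nat.card_Icc, nsmul_eq_mul, mul_one]
      have : n + 1 - (k + 1) = n - k := by omega
      rw [this, Nat.cast_sub hkn.le]
    rw [U, hsum]
    have h1 : (n : ℝ) - (k + 1 : ℕ) + 1 = (n : ℝ) - k := by push_cast; ring
    rw [h1, abs_div, abs_of_nonneg (by linarith : (0:ℝ) ≤ (n:ℝ) - k),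
      abs_of_nonneg (Real.sqrt_nonneg _), Real.div_sqrt]
end

section
/- Let $Y_t = f_t + Z_t$, $t=1,\ldots,T$, where $f$ is piecewise constant with change-points $\eta_1 < \cdots < \eta_N$ (i.e., $f_{\eta_j} \ne f_{\eta_j + 1}$). On the event $\{\|\mathrm{sign}(Z)\|_{\mathcal{I}^a} \le \lambda\}$, every interval $[s,e]$ with $D_{[s,e]} > \lambda$ contains at least one change-point, i.e., there exists $j$ with $[\eta_j, \eta_j + 1] \subseteq [s,e]$. -/
/-- Multiresolution sup-norm of `x` over a finite collection of intervals. -/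
noncomputable def mnorm (x : ℕ → ℝ) (I : Finset (ℕ × ℕ)) : ℝ :=
  sSup ((fun p : ℕ × ℕ => |U x p.1 p.2|) '' ↑I)

/-- `𝓘ᵃ`: all subintervals of `{1,…,T}` of length at least 2. -/
def Ia (T : ℕ) : Finset (ℕ × ℕ) :=
  ((Finset.Icc 1 T) ×ˢ (Finset.Icc 1 T)).filter fun p => p.1 < p.2

/-- `𝓘ᵃ_{[s,e]}`: all subintervals of `[s,e]` of length at least 2. -/
def IaSub (s e : ℕ) : Finset (ℕ × ℕ) :=
  ((Finset.Icc s e) ×ˢ (Finset.Icc s e)).filter fun p => p.1 < p.2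

/-- deterministic core of the coverage theorem. On the event
`‖sign(Z)‖_{𝓘ᵃ} ≤ λ`, every interval `[s,e]` whose deviation measure
`D_{[s,e]}` (minimum over the candidate levels of the multiresolution norm of
the residual signs) exceeds `λ` must contain a change-point of `f`. -/
theorem stmt14 (T N : ℕ) (f Z Y : ℕ → ℝ)
    (hYdef : ∀ t ∈ Finset.Icc 1 T, Y t = f t + Z t)
    (η : ℕ → ℕ) (hηmono : StrictMonoOn η (Set.Icc 1 N))
    (hηrange : ∀ j ∈ Finset.Icc 1 N, 1 ≤ η j ∧ η j < T)
    (hcp : ∀ t, 1 ≤ t → t < T → (f t ≠ f (t + 1) ↔ ∃ j ∈ Finset.Icc 1 N, η j = t))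
    (lam : ℝ)
    (hZ : mnorm (fun t => Real.sign (Z t)) (Ia T) ≤ lam)
    (s e : ℕ) (hs : 1 ≤ s) (hse : s < e) (heT : e ≤ T)
    (ys : Fin (e - s + 1) → ℝ)
    (hperm : ∃ σ : Equiv.Perm (Fin (e - s + 1)),
      ∀ t : Fin (e - s + 1), ys t = Y (s + (σ t).val))
    (hmono : Monotone ys)
    (c : Fin (2 * (e - s) + 3) → ℝ)
    (hc1 : c ⟨0, by omega⟩ < ys ⟨0, by omega⟩)
    (hc2 : ∀ j : Fin (e - s + 1), c ⟨2 * j.val + 1, by have := j.isLt; omega⟩ = ys j)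
    (hc3 : ∀ j : Fin (e - s),
      c ⟨2 * j.val + 2, by have := j.isLt; omega⟩ =
        (ys ⟨j.val, by have := j.isLt; omega⟩ + ys ⟨j.val + 1, by have := j.isLt; omega⟩) / 2)
    (hc4 : ys ⟨e - s, by omega⟩ < c ⟨2 * (e - s) + 2, by omega⟩)
    (hD : lam < ⨅ j : Fin (2 * (e - s) + 3),
        mnorm (fun t => Real.sign (Y t - c j)) (IaSub s e)) :
    ∃ j ∈ Finset.Icc 1 N, s ≤ η j ∧ η j + 1 ≤ e := by
  by_contra hno
  push_neg at hno
  -- f is constant on [s,e]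
  have hstep : ∀ t, s ≤ t → t < e → f (t + 1) = f t := by
    intro t hst hte
    by_contra hne
    obtain ⟨j, hj, hjt⟩ := (hcp t (le_trans hs hst) (lt_of_lt_of_le hte heT)).mp
      (fun h => hne h.symm)
    have := hno j hj
    omega
  have hconst : ∀ t, s ≤ t → t ≤ e → f t = f s := by
    intro t hst
    induction t, hst using Nat.le_induction with
    | base => intro _; rfl
    | succ t ht ih =>
      intro hte
      rw [hstep t ht (by omega), ih (by omega)]
  set v := f s with hv
  have hZeq : ∀ t ∈ Finset.Icc s e, Y t - v = Z t := by
    intro t ht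
    rw [Finset.mem_Icc] at ht
    have h1 : t ∈ Finset.Icc 1 T := Finset.mem_Icc.mpr ⟨le_trans hs ht.1, le_trans ht.2 heT⟩
    rw [hYdef t h1, hconst t ht.1 ht.2]; ring
  obtain ⟨σ, hσ⟩ := hperm
  have hYval : ∀ t ∈ Finset.Icc s e, ∃ i : Fin (e - s + 1), Y t = ys i := by
    intro t ht
    rw [Finset.mem_Icc] at ht
    refine ⟨σ.symm ⟨t - s, by omega⟩, ?_⟩
    rw [hσ (σ.symm ⟨t - s, by omega⟩), Equiv.apply_symm_apply]
    congr 1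
    simp only [Fin.val_mk]
    omega
  -- choose a candidate level whose residual signs agree with sign(Z)
  have hj0 : ∃ j0 : Fin (2 * (e - s) + 3),
      ∀ t ∈ Finset.Icc s e, Real.sign (Y t - c j0) = Real.sign (Z t) := by
    by_cases hB : v < ys ⟨0, by omega⟩
    · refine ⟨⟨0, by omega⟩, fun t ht => ?_⟩
      obtain ⟨i, hi⟩ := hYval t ht
      have h0i : ys ⟨0, by omega⟩ ≤ ys i := hmono (by simp [Fin.le_def])
      rw [← hZeq t ht, Real.sign_of_pos (by linarith), Real.sign_of_pos (by linarith)]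
    · by_cases hC : ys ⟨e - s, by omega⟩ < v
      · refine ⟨⟨2 * (e - s) + 2, by omega⟩, fun t ht => ?_⟩
        obtain ⟨i, hi⟩ := hYval t ht
        have h0i : ys i ≤ ys ⟨e - s, by omega⟩ :=
          hmono (by simp [Fin.le_def]; omega)
        rw [← hZeq t ht, Real.sign_of_neg (by linarith), Real.sign_of_neg (by linarith)]
      · by_cases hA : ∃ i : Fin (e - s + 1), ys i = v
        · obtain ⟨i, hi⟩ := hA
          refine ⟨⟨2 * i.val + 1, by have := i.isLt; omega⟩, fun t ht => ?_⟩
          rw [hc2 i, hi, hZeq t ht]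
        · push_neg at hA
          have hlt0 : ys ⟨0, by omega⟩ < v :=
            (not_lt.mp hB).lt_of_ne (fun h => hA _ h)
          have hltlast : v < ys ⟨e - s, by omega⟩ :=
            (not_lt.mp hC).lt_of_ne (fun h => hA _ h.symm)
          set Sset := Finset.univ.filter (fun i : Fin (e - s + 1) => ys i < v) with hS
          have hSne : Sset.Nonempty :=
            ⟨⟨0, by omega⟩, Finset.mem_filter.mpr ⟨Finset.mem_univ _, hlt0⟩⟩
          set k := Sset.max' hSne with hk
          have hkmem : ys k < v :=
            (Finset.mem_filter.mp (Sset.max'_mem hSne)).2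
          have hkmax : ∀ i : Fin (e - s + 1), ys i < v → i ≤ k := by
            intro i hi
            exact Sset.le_max' i (Finset.mem_filter.mpr ⟨Finset.mem_univ _, hi⟩)
          have hklt : k.val < e - s := by
            rcases lt_or_eq_of_le (Nat.lt_succ_iff.mp k.isLt) with h | h
            · exact h
            · exfalso
              have hkl : ys k = ys ⟨e - s, by omega⟩ := by
                congr 1
                exact Fin.ext h
              linarith
          have hk1 : v < ys ⟨k.val + 1, by omega⟩ := by
            have h1 : ¬ ys ⟨k.val + 1, by omega⟩ < v := by
              intro h
              have h2 := hkmax _ h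
              simp only [Fin.le_def] at h2
              omega
            exact (not_lt.mp h1).lt_of_ne (fun h => hA _ h.symm)
          have hmid : c ⟨2 * k.val + 2, by omega⟩ =
              (ys k + ys ⟨k.val + 1, by omega⟩) / 2 := by
            simpa using hc3 ⟨k.val, hklt⟩
          refine ⟨⟨2 * k.val + 2, by omega⟩, fun t ht => ?_⟩
          obtain ⟨i, hi⟩ := hYval t ht
          rw [← hZeq t ht, hmid]
          by_cases hcase : ys i < v
          · have hik : ys i ≤ ys k := hmono (hkmax i hcase)
            rw [Real.sign_of_neg (by linarith), Real.sign_of_neg (by linarith)]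
          · have hvi : v < ys i := (not_lt.mp hcase).lt_of_ne (fun h => hA _ h.symm)
            have hki : k < i := by
              by_contra h
              have : ys i ≤ ys k := hmono (not_lt.mp h)
              linarith
            have hik : ys ⟨k.val + 1, by omega⟩ ≤ ys i := by
              apply hmono
              simp only [Fin.le_def]
              exact hki
            rw [Real.sign_of_pos (by linarith), Real.sign_of_pos (by linarith)]
  obtain ⟨j0, hj0sign⟩ := hj0
  have hfinIa : BddAbove
      ((fun p : ℕ × ℕ => |U (fun t => Real.sign (Z t)) p.1 p.2|) '' ↑(Ia T)) :=
    (Set.Finite.image _ (Ia T).finite_toSet).bddAbove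
  have hseIa : (s, e) ∈ Ia T := by
    simp only [Ia, Finset.mem_filter, Finset.mem_product, Finset.mem_Icc]
    omega
  have hlam0 : 0 ≤ lam := by
    have h1 : |U (fun t => Real.sign (Z t)) s e| ≤ mnorm (fun t => Real.sign (Z t)) (Ia T) :=
      le_csSup hfinIa ⟨(s, e), by exact_mod_cast hseIa, rfl⟩
    have h2 := abs_nonneg (U (fun t => Real.sign (Z t)) s e)
    linarith
  have hmle : mnorm (fun t => Real.sign (Y t - c j0)) (IaSub s e) ≤ lam := by
    rw [mnorm]
    apply Real.sSup_le _ hlam0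
    rintro x ⟨⟨u, w⟩, hp, rfl⟩
    simp only [Finset.mem_coe, IaSub, Finset.mem_filter, Finset.mem_product,
      Finset.mem_Icc] at hp
    have hUeq : U (fun t => Real.sign (Y t - c j0)) u w = U (fun t => Real.sign (Z t)) u w := by
      rw [U, U]
      congr 1
      apply Finset.sum_congr rfl
      intro t ht
      rw [Finset.mem_Icc] at ht
      exact hj0sign t (Finset.mem_Icc.mpr ⟨le_trans hp.1.1.1 ht.1, le_trans ht.2 hp.1.2.2⟩)
    show |U (fun t => Real.sign (Y t - c j0)) u w| ≤ lam
    rw [hUeq]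
    calc |U (fun t => Real.sign (Z t)) u w| ≤ mnorm (fun t => Real.sign (Z t)) (Ia T) := by
          apply le_csSup hfinIa
          refine ⟨(u, w), ?_, rfl⟩
          simp only [Finset.mem_coe, Ia, Finset.mem_filter, Finset.mem_product, Finset.mem_Icc]
          omega
      _ ≤ lam := hZ
  have hinf : (⨅ j : Fin (2 * (e - s) + 3),
      mnorm (fun t => Real.sign (Y t - c j)) (IaSub s e)) ≤
      mnorm (fun t => Real.sign (Y t - c j0)) (IaSub s e) :=
    ciInf_le (Finite.bddBelow_range _) j0
  linarith
end

section
/- Let $Y_t = f_t + Z_t$ with piecewise-constant $f$ having change-points $\eta_1 < \cdots < \eta_N$, and let $\mathcal{S} = \{S_1, \ldots, S_R\}$ be any (random) collection of intervals each of which satisfies $D_{S_i} > \lambda_\alpha$. Then $P(\exists i \in \{1,\ldots,R\}\ \forall j \in \{1,\ldots,N\}: [\eta_j, \eta_j+1] \not\subseteq S_i) \le P(\|\mathrm{sign}(Z)\|_{\mathcal{I}^a} > \lambda_\alpha)$. -/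
open MeasureTheory

/-- The RNSP deviation measure `D_{[s,e]}`: the smallest multiresolution
sup-norm of the residual signs over all constant level fits (by Proposition 1
this infimum over all real levels equals the minimum over the finitely many
candidate levels). -/
noncomputable def Dmeas (Y : ℕ → ℝ) (s e : ℕ) : ℝ :=
  ⨅ c : ℝ, mnorm (fun t => Real.sign (Y t - c)) (IaSub s e)

/-! On an interval without change-points the signal is a constant `c`, so fitting the level `c`
leaves exactly the signs of the noise as residuals. Hence `D_{[s,e]}` is at most the
multiresolution norm of `sign(Z)` over the subintervals of `[s,e]`, which in turn is at most
`‖sign(Z)‖_{𝓘ᵃ}`. An interval with `D_{[s,e]} > λ_α` but no change-point therefore forces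
`‖sign(Z)‖_{𝓘ᵃ} > λ_α`. -/

lemma mnorm_nonneg (x : ℕ → ℝ) (I : Finset (ℕ × ℕ)) : 0 ≤ mnorm x I :=
  Real.sSup_nonneg <| by
    rintro _ ⟨q, -, rfl⟩
    exact abs_nonneg _

lemma mnorm_mono (x : ℕ → ℝ) {I J : Finset (ℕ × ℕ)} (hIJ : I ⊆ J) : mnorm x I ≤ mnorm x J := by
  rcases I.eq_empty_or_nonempty with rfl | hI
  · simpa [mnorm] using mnorm_nonneg x J
  · obtain ⟨q, hq⟩ := hI
    exact csSup_le_csSup ((J.finite_toSet.image _).bddAbove) ⟨_, q, hq, rfl⟩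
      (Set.image_mono (Finset.coe_subset.mpr hIJ))

lemma mnorm_congr {x y : ℕ → ℝ} {I : Finset (ℕ × ℕ)}
    (h : ∀ q ∈ I, ∀ t, q.1 ≤ t → t ≤ q.2 → x t = y t) : mnorm x I = mnorm y I := by
  unfold mnorm U
  refine congrArg sSup (Set.image_congr fun q hq => ?_)
  rw [Finset.sum_congr rfl fun t ht => h q hq t (Finset.mem_Icc.mp ht).1 (Finset.mem_Icc.mp ht).2]

lemma mem_IaSub {s e : ℕ} {q : ℕ × ℕ} :
    q ∈ IaSub s e ↔ s ≤ q.1 ∧ q.1 < q.2 ∧ q.2 ≤ e := by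
  simp only [IaSub, Finset.mem_filter, Finset.mem_product, Finset.mem_Icc]
  omega

lemma IaSub_subset_Ia {s e T : ℕ} (hs : 1 ≤ s) (he : e ≤ T) : IaSub s e ⊆ Ia T := by
  intro q hq
  rw [mem_IaSub] at hq
  simp only [Ia, Finset.mem_filter, Finset.mem_product, Finset.mem_Icc]
  omega

lemma Dmeas_le_mnorm (Y : ℕ → ℝ) (s e : ℕ) (c : ℝ) :
    Dmeas Y s e ≤ mnorm (fun t => Real.sign (Y t - c)) (IaSub s e) :=
  ciInf_le ⟨0, by rintro _ ⟨c', rfl⟩; exact mnorm_nonneg _ _⟩ c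

lemma Dmeas_le_mnorm_sign_of_const {f z : ℕ → ℝ} {s e : ℕ} {c : ℝ}
    (hf : ∀ t, s ≤ t → t ≤ e → f t = c) :
    Dmeas (fun t => f t + z t) s e ≤ mnorm (fun t => Real.sign (z t)) (IaSub s e) := by
  refine (Dmeas_le_mnorm _ s e c).trans_eq (mnorm_congr fun q hq t hqt htq => ?_)
  rw [mem_IaSub] at hq
  rw [hf t (by omega) (by omega), add_sub_cancel_left]

lemma eq_of_forall_eq_succ {α : Type*} {f : ℕ → α} {s e : ℕ}
    (h : ∀ t, s ≤ t → t < e → f t = f (t + 1)) : ∀ t, s ≤ t → t ≤ e → f t = f s := by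
  intro t hst
  induction t, hst using Nat.le_induction with
  | base => exact fun _ => rfl
  | succ t hst ih => exact fun hte => (h t hst hte).symm.trans (ih (by omega))

theorem stmt15_general {Ω : Type*} [MeasurableSpace Ω] (μ : Measure Ω)
    (T N : ℕ) (f : ℕ → ℝ) (Z Y : ℕ → Ω → ℝ)
    (hY : ∀ t ω, Y t ω = f t + Z t ω)
    (η : ℕ → ℕ)
    (hcp : ∀ t, 1 ≤ t → t < T → (f t ≠ f (t + 1) ↔ ∃ j ∈ Finset.Icc 1 N, η j = t))
    (lam : ℝ) (S : Ω → Finset (ℕ × ℕ))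
    (hSrange : ∀ ω, ∀ p ∈ S ω, 1 ≤ p.1 ∧ p.1 < p.2 ∧ p.2 ≤ T)
    (hSD : ∀ ω, ∀ p ∈ S ω, lam < Dmeas (fun t => Y t ω) p.1 p.2) :
    μ {ω | ∃ p ∈ S ω, ∀ j ∈ Finset.Icc 1 N, ¬ (p.1 ≤ η j ∧ η j + 1 ≤ p.2)}
      ≤ μ {ω | lam < mnorm (fun t => Real.sign (Z t ω)) (Ia T)} := by
  refine measure_mono fun ω ⟨p, hpS, hnocp⟩ => ?_
  obtain ⟨hs, -, he⟩ := hSrange ω p hpS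
  have hf_const : ∀ t, p.1 ≤ t → t ≤ p.2 → f t = f p.1 :=
    eq_of_forall_eq_succ fun t hst hte => by
      by_contra hne
      obtain ⟨j, hj, rfl⟩ := (hcp t (by omega) (by omega)).mp hne
      exact hnocp j hj ⟨hst, hte⟩
  have hY_eq : (fun t => Y t ω) = fun t => f t + Z t ω := funext fun t => hY t ω
  calc lam < Dmeas (fun t => Y t ω) p.1 p.2 := hSD ω p hpS
    _ ≤ mnorm (fun t => Real.sign (Z t ω)) (IaSub p.1 p.2) :=
      hY_eq ▸ Dmeas_le_mnorm_sign_of_const hf_const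
    _ ≤ mnorm (fun t => Real.sign (Z t ω)) (Ia T) := mnorm_mono _ (IaSub_subset_Ia hs he)

/-- RNSP coverage guarantee. For any (random) collection of
intervals each with deviation measure exceeding `λ_α`, the probability that
some interval contains no change-point is at most
`P(‖sign(Z)‖_{𝓘ᵃ} > λ_α)`. -/
theorem stmt15 {Ω : Type*} [MeasurableSpace Ω] (μ : Measure Ω) [IsProbabilityMeasure μ]
    (T N : ℕ) (f : ℕ → ℝ) (Z Y : ℕ → Ω → ℝ)
    (hY : ∀ t ω, Y t ω = f t + Z t ω)
    (η : ℕ → ℕ) (hηmono : StrictMonoOn η (Set.Icc 1 N))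
    (hηrange : ∀ j ∈ Finset.Icc 1 N, 1 ≤ η j ∧ η j < T)
    (hcp : ∀ t, 1 ≤ t → t < T → (f t ≠ f (t + 1) ↔ ∃ j ∈ Finset.Icc 1 N, η j = t))
    (lam : ℝ) (S : Ω → Finset (ℕ × ℕ))
    (hSrange : ∀ ω, ∀ p ∈ S ω, 1 ≤ p.1 ∧ p.1 < p.2 ∧ p.2 ≤ T)
    (hSD : ∀ ω, ∀ p ∈ S ω, lam < Dmeas (fun t => Y t ω) p.1 p.2) :
    μ {ω | ∃ p ∈ S ω, ∀ j ∈ Finset.Icc 1 N, ¬ (p.1 ≤ η j ∧ η j + 1 ≤ p.2)}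
      ≤ μ {ω | lam < mnorm (fun t => Real.sign (Z t ω)) (Ia T)} :=
  stmt15_general μ T N f Z Y hY η hcp lam S hSrange hSD
end
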